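/- arXiv:2106.10032 — 4 statements merged into one kernel-verified Lean document; each statement's English description precedes it below -/
import Mathlib

section
/- Let m ≥ 3 and let A be the m×m real matrix with entries A_{ij} = m/4 − |i−j|/2 for i,j ∈ {1,…,m}. Let B be the m×m matrix with B_{jj} = 2 for all j, B_{j,j+1} = B_{j+1,j} = −1 for 1 ≤ j ≤ m−1, B_{1,m} = B_{m,1} = 1, and all other entries 0 (minus the discrete Laplace operator with antiperiodic boundary condition). Then A·B = I and B·A = I; in particular A is invertible with A⁻¹ = B. -/
/-!
Write `A i j = g (i - j)` with `g d = m/4 - |d|/2`. On `[-m, m]` the function `g` is antiperiodic,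
`g (d - m) = -g d` for `0 ≤ d ≤ m`, so the corner entries `+1` of `B` act on a column of `A`
exactly as the entries `-1` of the Laplacian would across the boundary of an antiperiodic
extension. Hence every entry of `B * A` is a second difference `2 g d - g (d - 1) - g (d + 1)`,
which vanishes except at the kink `d = 0` of `|d|`, where it is `1`. For square matrices
`B * A = 1` gives `A * B = 1`.
-/

open Matrix

theorem Fintype.sum_eq_add_add {α M : Type*} [Fintype α] [AddCommMonoid M] {f : α → M}
    (a b c : α) (hab : a ≠ b) (hac : a ≠ c) (hbc : b ≠ c)
    (h : ∀ x, x ≠ a → x ≠ b → x ≠ c → f x = 0) :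
    ∑ x, f x = f a + f b + f c := by
  classical
  rw [← Finset.sum_subset (Finset.subset_univ {a, b, c}) (by simp_all),
    Finset.sum_insert (by simp [hab, hac]), Finset.sum_pair hbc, add_assoc]

theorem Int.abs_sub_one_add_abs_add_one (d : ℤ) :
    |d - 1| + |d + 1| = 2 * |d| + if d = 0 then 2 else 0 := by
  simp only [abs_eq_max_neg]
  split_ifs <;> omega

noncomputable def antiperiodicGreen (m : ℕ) (d : ℤ) : ℝ := m / 4 - |(d : ℝ)| / 2

theorem antiperiodicGreen_sub_natCast {m : ℕ} {x : ℤ} (h0 : 0 ≤ x) (hx : x ≤ m) :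
    antiperiodicGreen m (x - m) = -antiperiodicGreen m x := by
  have h0' : (0 : ℝ) ≤ x := by exact_mod_cast h0
  have hx' : (x : ℝ) ≤ m := by exact_mod_cast hx
  simp only [antiperiodicGreen, Int.cast_sub, Int.cast_natCast]
  rw [abs_of_nonpos (by linarith), abs_of_nonneg h0']
  ring

theorem antiperiodicGreen_second_diff (m : ℕ) (d : ℤ) :
    2 * antiperiodicGreen m d - antiperiodicGreen m (d - 1) - antiperiodicGreen m (d + 1) =
      if d = 0 then 1 else 0 := by
  have h := congrArg (Int.cast : ℤ → ℝ) (Int.abs_sub_one_add_abs_add_one d)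
  push_cast at h
  simp only [antiperiodicGreen, Int.cast_sub, Int.cast_add, Int.cast_one]
  split_ifs at h ⊢ <;> linarith

def antiperiodicLaplacian (m : ℕ) : Matrix (Fin m) (Fin m) ℝ :=
  Matrix.of fun i j =>
    if (i : ℕ) = (j : ℕ) then 2
    else if (i : ℕ) + 1 = (j : ℕ) ∨ (j : ℕ) + 1 = (i : ℕ) then -1
    else if ((i : ℕ) = 0 ∧ (j : ℕ) = m - 1) ∨ ((j : ℕ) = 0 ∧ (i : ℕ) = m - 1) then 1
    else 0

theorem antiperiodicLaplacian_mulVec_apply_zero {m : ℕ} (hm : 3 ≤ m) (v : ℤ → ℝ)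
    (hlow : v (-1) = -v (m - 1)) :
    (antiperiodicLaplacian m *ᵥ fun k => v k) ⟨0, by omega⟩ = 2 * v 0 - v (-1) - v 1 := by
  rw [mulVec, dotProduct,
    Fintype.sum_eq_add_add ⟨0, by omega⟩ ⟨1, by omega⟩ ⟨m - 1, by omega⟩
      (Fin.ne_of_val_ne (by dsimp only; omega)) (Fin.ne_of_val_ne (by dsimp only; omega))
      (Fin.ne_of_val_ne (by dsimp only; omega))]
  · have hm1 : ((m - 1 : ℕ) : ℤ) = m - 1 := by omega
    simp (disch := omega) only [antiperiodicLaplacian, of_apply, if_neg, true_or, and_self,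
      ↓reduceIte, hm1]
    push_cast
    rw [hlow]
    ring
  · intro ⟨k, hk⟩ h1 h2 h3
    simp only [ne_eq, Fin.ext_iff] at h1 h2 h3
    simp (disch := omega) only [antiperiodicLaplacian, of_apply, if_neg, zero_mul]

theorem antiperiodicLaplacian_mulVec_apply_last {m : ℕ} (hm : 3 ≤ m) (v : ℤ → ℝ)
    (hhigh : v m = -v 0) :
    (antiperiodicLaplacian m *ᵥ fun k => v k) ⟨m - 1, by omega⟩ =
      2 * v (m - 1) - v (m - 1 - 1) - v m := by
  rw [mulVec, dotProduct,
    Fintype.sum_eq_add_add ⟨0, by omega⟩ ⟨m - 2, by omega⟩ ⟨m - 1, by omega⟩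
      (Fin.ne_of_val_ne (by dsimp only; omega)) (Fin.ne_of_val_ne (by dsimp only; omega))
      (Fin.ne_of_val_ne (by dsimp only; omega))]
  · have hm1 : ((m - 1 : ℕ) : ℤ) = m - 1 := by omega
    have hm2 : ((m - 2 : ℕ) : ℤ) = m - 1 - 1 := by omega
    simp (disch := omega) only [antiperiodicLaplacian, of_apply, if_pos, if_neg, or_true,
      and_self, ↓reduceIte, hm1, hm2]
    rw [hhigh]
    push_cast
    ring
  · intro ⟨k, hk⟩ h1 h2 h3
    simp only [ne_eq, Fin.ext_iff] at h1 h2 h3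
    simp (disch := omega) only [antiperiodicLaplacian, of_apply, if_neg, zero_mul]

theorem antiperiodicLaplacian_mulVec_apply_of_pos_of_lt {m i : ℕ} (v : ℤ → ℝ) (h0 : 0 < i)
    (hi : i + 1 < m) :
    (antiperiodicLaplacian m *ᵥ fun k => v k) ⟨i, by omega⟩ =
      2 * v i - v (i - 1) - v (i + 1) := by
  rw [mulVec, dotProduct,
    Fintype.sum_eq_add_add ⟨i - 1, by omega⟩ ⟨i, by omega⟩ ⟨i + 1, hi⟩
      (Fin.ne_of_val_ne (by dsimp only; omega)) (Fin.ne_of_val_ne (by dsimp only; omega))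
      (Fin.ne_of_val_ne (by dsimp only; omega))]
  · have hi1 : ((i - 1 : ℕ) : ℤ) = i - 1 := by omega
    simp (disch := omega) only [antiperiodicLaplacian, of_apply, if_pos, if_neg, true_or,
      ↓reduceIte]
    push_cast [hi1]
    ring
  · intro ⟨k, hk⟩ h1 h2 h3
    simp only [ne_eq, Fin.ext_iff] at h1 h2 h3
    simp (disch := omega) only [antiperiodicLaplacian, of_apply, if_neg, zero_mul]

theorem antiperiodicLaplacian_mulVec {m : ℕ} (hm : 3 ≤ m) (v : ℤ → ℝ)
    (hlow : v (-1) = -v (m - 1)) (hhigh : v m = -v 0) (i : Fin m) :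
    (antiperiodicLaplacian m *ᵥ fun k => v k) i = 2 * v i - v (i - 1) - v (i + 1) := by
  obtain ⟨i, hi⟩ := i
  rcases Nat.eq_zero_or_pos i with rfl | h0
  · simpa using antiperiodicLaplacian_mulVec_apply_zero hm v hlow
  rcases Nat.lt_or_ge (i + 1) m with hlt | hge
  · exact antiperiodicLaplacian_mulVec_apply_of_pos_of_lt v h0 hlt
  obtain rfl : i = m - 1 := by omega
  have hm1 : ((m - 1 : ℕ) : ℤ) = m - 1 := by omega
  simpa [hm1] using antiperiodicLaplacian_mulVec_apply_last hm v hhigh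

theorem antiperiodicLaplacian_mul_antiperiodicGreen {m : ℕ} (hm : 3 ≤ m) :
    antiperiodicLaplacian m * Matrix.of (fun i j : Fin m => antiperiodicGreen m (i - j)) = 1 := by
  ext i j
  have hj := j.isLt
  have hlow := antiperiodicGreen_sub_natCast (m := m) (x := m - 1 - j) (by omega) (by omega)
  have hhigh := antiperiodicGreen_sub_natCast (m := m) (x := m - j) (by omega) (by omega)
  rw [show (m : ℤ) - 1 - j - m = -1 - j by ring] at hlow
  rw [show (m : ℤ) - j - m = -j by ring] at hhigh
  have hrow := antiperiodicLaplacian_mulVec hm (fun k => antiperiodicGreen m (k - j))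
    (by simpa using hlow) (by simpa using neg_eq_iff_eq_neg.mp hhigh.symm) i
  rw [show (i : ℤ) - 1 - j = i - j - 1 by ring,
    show (i : ℤ) + 1 - j = i - j + 1 by ring] at hrow
  calc _ = 2 * antiperiodicGreen m (i - j) - antiperiodicGreen m (i - j - 1)
        - antiperiodicGreen m (i - j + 1) := hrow
    _ = _ := by
      simp only [antiperiodicGreen_second_diff, one_apply, sub_eq_zero, Int.natCast_inj,
        Fin.val_inj]

/-- The inverse of the matrix `A` with entries `A i j = m/4 - |i - j|/2` is minus the
discrete Laplace operator with antiperiodic boundary conditions. -/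
theorem stmt_0 (m : ℕ) (hm : 3 ≤ m) (A B : Matrix (Fin m) (Fin m) ℝ)
    (hA : ∀ i j : Fin m, A i j = (m : ℝ) / 4 - |((i : ℕ) : ℝ) - ((j : ℕ) : ℝ)| / 2)
    (hB : ∀ i j : Fin m, B i j =
      if (i : ℕ) = (j : ℕ) then 2
      else if (i : ℕ) + 1 = (j : ℕ) ∨ (j : ℕ) + 1 = (i : ℕ) then -1
      else if ((i : ℕ) = 0 ∧ (j : ℕ) = m - 1) ∨ ((j : ℕ) = 0 ∧ (i : ℕ) = m - 1) then 1
      else 0) :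
    A * B = 1 ∧ B * A = 1 ∧ A⁻¹ = B := by
  have hA' : A = of fun i j : Fin m => antiperiodicGreen m (i - j) := by
    ext i j
    rw [hA, of_apply, antiperiodicGreen, Int.cast_sub, Int.cast_natCast, Int.cast_natCast]
  have hB' : B = antiperiodicLaplacian m := Matrix.ext hB
  have hBA : B * A = 1 := by
    rw [hA', hB']
    exact antiperiodicLaplacian_mul_antiperiodicGreen hm
  have hAB : A * B = 1 := mul_eq_one_comm.mp hBA
  exact ⟨hAB, hBA, inv_eq_right_inv hAB⟩
end

section
/- Let G be a finite simple graph with vertex set V and edge set E, and fix a linear order on V. Then the following are equivalent: (i) there exists an assignment f : E → ℝ with f(e) ≠ 0 for every edge e such that for every vertex v the signed sum over all edges e incident to v of f(e), taken with sign +1 if v is the larger endpoint of e and −1 if v is the smaller endpoint, is zero; (ii) every edge of G lies on a cycle of G. -/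
open Finset

/-- The sign of the vertex `v` in the edge `e`: `+1` if `v` is the larger endpoint of `e`,
`-1` if `v` is the smaller endpoint, and `0` if `v` is not an endpoint of `e`. -/
noncomputable def edgeSgn {V : Type*} [LinearOrder V] (v : V) : Sym2 V → ℝ :=
  Sym2.lift ⟨fun a b => (if v = max a b then 1 else 0) - (if v = min a b then 1 else 0),
    fun a b => by simp only [max_comm, min_comm]⟩

/-!
A circulation vanishes on every bridge `ab`: summing the vertex conditions over the set `S` of
vertices still reachable from `a` once `ab` is deleted leaves `±f(ab)`, since `ab` is the only
edge with exactly one endpoint in `S`. Conversely, traversing a cycle through `e` with signs gives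
a circulation that is `±1` on `e`, so no evaluation `f ↦ f e` vanishes on the circulation space;
as a real vector space is not a finite union of proper subspaces, some circulation is nonzero on
every edge.
-/

open SimpleGraph

section EdgeSign

variable {V : Type*} [LinearOrder V]

lemma edgeSgn_mk (v x y : V) :
    edgeSgn v s(x, y) = (if v = max x y then 1 else 0) - (if v = min x y then 1 else 0) :=
  rfl

lemma edgeSgn_snd_ne_zero {x y : V} (h : x ≠ y) : edgeSgn y s(x, y) ≠ 0 := by
  rcases h.lt_or_gt with h | h <;> simp [edgeSgn_mk, h.le, h.ne, h.ne']

lemma edgeSgn_mul_edgeSgn_snd {x y : V} (h : x ≠ y) (v : V) :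
    edgeSgn v s(x, y) * edgeSgn y s(x, y) =
      (if v = y then 1 else 0) - (if v = x then 1 else 0) := by
  rcases h.lt_or_gt with h | h <;> simp [edgeSgn_mk, h.le, h.ne, h.ne']

lemma sum_edgeSgn_mk (S : Finset V) (x y : V) :
    ∑ v ∈ S, edgeSgn v s(x, y) =
      (if max x y ∈ S then 1 else 0) - (if min x y ∈ S then 1 else 0) := by
  simp only [edgeSgn_mk, sum_sub_distrib, sum_ite_eq']

lemma sum_edgeSgn_eq_zero {S : Finset V} {x y : V} (h : x ∈ S ↔ y ∈ S) :
    ∑ v ∈ S, edgeSgn v s(x, y) = 0 := by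
  rcases le_total x y with hxy | hxy <;> simp [sum_edgeSgn_mk, hxy, h]

lemma sum_edgeSgn_ne_zero {S : Finset V} {x y : V} (hx : x ∈ S) (hy : y ∉ S) :
    ∑ v ∈ S, edgeSgn v s(x, y) ≠ 0 := by
  rcases le_total x y with hxy | hxy <;> simp [sum_edgeSgn_mk, hxy, hx, hy]

end EdgeSign

section WalkFlow

variable {V : Type*} [LinearOrder V] {G : SimpleGraph V}

noncomputable def walkFlow {u w : V} (p : G.Walk u w) (e : Sym2 V) : ℝ :=
  (p.darts.map fun d => if d.edge = e then edgeSgn d.snd e else 0).sum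

@[simp]
lemma walkFlow_nil {u : V} (e : Sym2 V) : walkFlow (Walk.nil : G.Walk u u) e = 0 :=
  rfl

lemma walkFlow_cons {x y w : V} (h : G.Adj x y) (p : G.Walk y w) (e : Sym2 V) :
    walkFlow (Walk.cons h p) e =
      (if s(x, y) = e then edgeSgn y s(x, y) else 0) + walkFlow p e := by
  simp only [walkFlow, Walk.darts_cons, List.map_cons, List.sum_cons, Dart.edge_mk]
  congr 1
  split_ifs with h <;> simp [h]

lemma walkFlow_eq_zero_of_notMem_edges {u w : V} (p : G.Walk u w) {e : Sym2 V}
    (he : e ∉ p.edges) : walkFlow p e = 0 := by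
  refine List.sum_eq_zero fun r hr => ?_
  obtain ⟨d, hd, rfl⟩ := List.mem_map.mp hr
  rw [if_neg]
  exact fun hde => he (hde ▸ List.mem_map_of_mem hd)

lemma SimpleGraph.Walk.IsTrail.walkFlow_ne_zero {u w : V} {p : G.Walk u w} (hp : p.IsTrail)
    {e : Sym2 V} (he : e ∈ p.edges) : walkFlow p e ≠ 0 := by
  induction p with
  | nil => simp at he
  | @cons x y w h p ih =>
    rw [Walk.isTrail_cons] at hp
    rw [walkFlow_cons]
    by_cases hxy : s(x, y) = e
    · subst hxy
      simpa [walkFlow_eq_zero_of_notMem_edges p hp.2] using edgeSgn_snd_ne_zero h.ne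
    · have he' : e ∈ p.edges := by simpa [Walk.edges_cons, Ne.symm hxy] using he
      simpa [hxy] using ih hp.1 he'

end WalkFlow

section Circulation

variable {V : Type*} [LinearOrder V] (G : SimpleGraph V) [Fintype G.edgeSet]

def circulations : Submodule ℝ (Sym2 V → ℝ) where
  carrier := {f | ∀ v, ∑ e ∈ G.edgeFinset, edgeSgn v e * f e = 0}
  zero_mem' := by simp
  add_mem' hf hg v := by simp [mul_add, sum_add_distrib, hf v, hg v]
  smul_mem' c f hf v := by simp [mul_left_comm _ c, ← mul_sum, hf v]

variable {G}

lemma mem_circulations {f : Sym2 V → ℝ} :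
    f ∈ circulations G ↔ ∀ v, ∑ e ∈ G.edgeFinset, edgeSgn v e * f e = 0 :=
  Iff.rfl

lemma sum_mul_eq_zero_of_mem_circulations {f : Sym2 V → ℝ} (hf : f ∈ circulations G)
    (S : Finset V) : ∑ e ∈ G.edgeFinset, (∑ v ∈ S, edgeSgn v e) * f e = 0 := by
  simp_rw [sum_mul, sum_comm (s := G.edgeFinset), mem_circulations.mp hf, sum_const_zero]

lemma apply_eq_zero_of_isBridge [Fintype V] {f : Sym2 V → ℝ} (hf : f ∈ circulations G)
    {e : Sym2 V} (he : e ∈ G.edgeSet) (hb : G.IsBridge e) : f e = 0 := by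
  classical
  induction e using Sym2.ind with | _ a b =>
  set H := G.deleteEdges {s(a, b)}
  set S := univ.filter (H.Reachable a)
  have haS : a ∈ S := by simp [S]
  have hbS : b ∉ S := by simpa [S] using isBridge_iff.mp hb
  have hflux := sum_mul_eq_zero_of_mem_circulations hf S
  rw [sum_eq_single_of_mem s(a, b) (mem_edgeFinset.mpr he)] at hflux
  · exact (mul_eq_zero.mp hflux).resolve_left (sum_edgeSgn_ne_zero haS hbS)
  intro e he' hne
  induction e using Sym2.ind with | _ x y =>
  have hxy : H.Adj x y := by simp_all [H]
  have hiff : x ∈ S ↔ y ∈ S := by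
    simpa [S] using ⟨fun h => h.trans hxy.reachable, fun h => h.trans hxy.symm.reachable⟩
  rw [sum_edgeSgn_eq_zero hiff, zero_mul]

lemma sum_edgeSgn_mul_walkFlow {u w : V} (p : G.Walk u w) (v : V) :
    ∑ e ∈ G.edgeFinset, edgeSgn v e * walkFlow p e =
      (if v = w then 1 else 0) - (if v = u then 1 else 0) := by
  induction p with
  | nil => simp
  | @cons x y w h p ih =>
    have hxy : s(x, y) ∈ G.edgeFinset := mem_edgeFinset.mpr h
    simp only [walkFlow_cons, mul_add, sum_add_distrib, ih, mul_ite, mul_zero,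
      sum_ite_eq, if_pos hxy, edgeSgn_mul_edgeSgn_snd h.ne]
    ring

lemma walkFlow_mem_circulations {u : V} (c : G.Walk u u) : walkFlow c ∈ circulations G :=
  fun v => by rw [sum_edgeSgn_mul_walkFlow, sub_self]

end Circulation

theorem stmt_5_general {V : Type*} [Fintype V] [LinearOrder V]
    (G : SimpleGraph V) [DecidableRel G.Adj] :
    (∃ f : Sym2 V → ℝ, (∀ e ∈ G.edgeFinset, f e ≠ 0) ∧
      ∀ v : V, ∑ e ∈ G.edgeFinset, edgeSgn v e * f e = 0) ↔
    (∀ e ∈ G.edgeSet, ∃ (a : V) (c : G.Walk a a), c.IsCycle ∧ e ∈ c.edges) := by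
  constructor
  · rintro ⟨f, hf0, hf⟩ e he
    by_contra! hcyc
    have hb : G.IsBridge e := (isBridge_iff_forall_cycle_notMem he).mpr hcyc
    exact hf0 e (mem_edgeFinset.mpr he) (apply_eq_zero_of_isBridge hf he hb)
  · intro hcyc
    have hcirc (e : G.edgeFinset) :
        ∃ f ∈ circulations G, LinearMap.proj (R := ℝ) (φ := fun _ => ℝ) e.1 f ≠ 0 := by
      obtain ⟨a, c, hc, he⟩ := hcyc e (mem_edgeFinset.mp e.2)
      exact ⟨walkFlow c, walkFlow_mem_circulations c, hc.isCircuit.isTrail.walkFlow_ne_zero he⟩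
    obtain ⟨f, hf, hf0⟩ := Module.Dual.exists_forall_mem_ne_zero_of_forall_exists _ _ hcirc
    exact ⟨f, fun e he => hf0 ⟨e, he⟩, hf⟩

/-- A nowhere-zero edge assignment with zero signed sum at every vertex exists if and only
if every edge of the graph lies on a cycle. -/
theorem stmt_5 {V : Type*} [Fintype V] [DecidableEq V] [LinearOrder V]
    (G : SimpleGraph V) [DecidableRel G.Adj] :
    (∃ f : Sym2 V → ℝ, (∀ e ∈ G.edgeFinset, f e ≠ 0) ∧
      ∀ v : V, ∑ e ∈ G.edgeFinset, edgeSgn v e * f e = 0) ↔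
    (∀ e ∈ G.edgeSet, ∃ (a : V) (c : G.Walk a a), c.IsCycle ∧ e ∈ c.edges) :=
  stmt_5_general G
end

section
/- Call a subgraph H of a simple graph a merger generator if H is either (a) a cycle of even length, or (b) the union of two odd cycles that share exactly one vertex and no edges, or (c) the union of two vertex-disjoint odd cycles together with a path joining a vertex of one cycle to a vertex of the other and meeting the two cycles only in its endpoints. Let G be a finite simple graph with edge set E. Then the following are equivalent: (i) there exists an assignment f : E → ℝ with f(e) ≠ 0 for every edge e such that for every vertex v the (unsigned) sum of f(e) over all edges e incident to v is zero; (ii) every edge of G belongs to a subgraph of G that is a merger generator. -/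
open Finset

/-- The edge `e` lies on an even cycle of `G`. -/
def LiesOnEvenCycle {V : Type*} (G : SimpleGraph V) (e : Sym2 V) : Prop :=
  ∃ (a : V) (c : G.Walk a a), c.IsCycle ∧ Even c.length ∧ e ∈ c.edges

/-- The edge `e` lies on a subgraph of `G` which is the union of two odd cycles sharing
exactly one vertex and no edges. -/
def LiesOnTwoOddCyclesSharingAVertex {V : Type*} (G : SimpleGraph V) (e : Sym2 V) : Prop :=
  ∃ (a : V) (c₁ c₂ : G.Walk a a), c₁.IsCycle ∧ c₂.IsCycle ∧
    Odd c₁.length ∧ Odd c₂.length ∧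
    (∀ x : V, x ∈ c₁.support → x ∈ c₂.support → x = a) ∧
    (∀ e' : Sym2 V, e' ∈ c₁.edges → e' ∉ c₂.edges) ∧
    (e ∈ c₁.edges ∨ e ∈ c₂.edges)

/-- The edge `e` lies on a subgraph of `G` which is the union of two vertex-disjoint odd
cycles together with a path joining a vertex of one cycle to a vertex of the other and
meeting the two cycles only in its endpoints. -/
def LiesOnTwoOddCyclesJoinedByAPath {V : Type*} (G : SimpleGraph V) (e : Sym2 V) : Prop :=
  ∃ (a b : V) (c₁ : G.Walk a a) (c₂ : G.Walk b b) (p : G.Walk a b),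
    c₁.IsCycle ∧ c₂.IsCycle ∧ Odd c₁.length ∧ Odd c₂.length ∧ p.IsPath ∧
    (∀ x : V, x ∈ c₁.support → x ∉ c₂.support) ∧
    (∀ x : V, x ∈ p.support → x ∈ c₁.support → x = a) ∧
    (∀ x : V, x ∈ p.support → x ∈ c₂.support → x = b) ∧
    (e ∈ c₁.edges ∨ e ∈ c₂.edges ∨ e ∈ p.edges)

/-!
Along a walk, the weights `+1, -1, +1, …` on successive edges have zero unsigned sum at every
inner vertex. So an even cycle carries a nonzero balanced function (zero sum at every vertex), and
so do two odd cycles sharing a vertex (take the difference) or two odd cycles joined by a path (the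
path, weighted by `-2`, cancels the excess `2` the cycles leave at their base points). A generic
linear combination of these, one for each edge, is nowhere zero.

Conversely, let `f` be balanced with `f e ≠ 0`. At each endpoint of an edge of the support some
other edge carries a value of the opposite sign. A longest sign-alternating path closes up into a
cycle of the support; if that cycle is odd, alternation around it shows that one more edge of the
support leaves it. A longest path of the support that starts with this edge and avoids the cycle
closes up, at its far end, into an even cycle, into a second odd cycle sharing a vertex with the
first, or into a second odd cycle joined to the first by a path. Subtracting a multiple of the
balanced function of this generator removes one of its edges from the support of `f` and keeps
`e`, so induction on the size of the support finds a generator through `e`.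
-/

theorem List.IsChain.neg_one_pow_mul_pos {α : Type*} (f : α → ℝ) :
    ∀ {l : List α} (hne : l ≠ []), l.IsChain (fun a b => f a * f b < 0) →
      f (l.head hne) ≠ 0 → 0 < (-1) ^ (l.length + 1) * f (l.head hne) * f (l.getLast hne)
  | [a], _, _, ha => by simpa [pow_two] using mul_self_pos.mpr ha
  | a :: b :: l, _, hl, _ => by
    rw [List.isChain_cons_cons] at hl
    have ih := neg_one_pow_mul_pos f (List.cons_ne_nil b l) hl.2 (right_ne_zero_of_mul hl.1.ne)
    simp only [List.head_cons, List.getLast_cons_cons, List.length_cons, pow_succ _ (_ + 1 + 1)]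
      at ih ⊢
    have hb : 0 < f b * f b := mul_self_pos.mpr (right_ne_zero_of_mul hl.1.ne)
    have := mul_neg_of_neg_of_pos hl.1 ih
    nlinarith

theorem Function.support_add_of_disjoint {α M : Type*} [AddMonoid M] {f g : α → M}
    (h : Disjoint (Function.support f) (Function.support g)) :
    Function.support (f + g) = Function.support f ∪ Function.support g := by
  ext x
  by_cases hf : f x = 0
  · simp [hf]
  · simp [hf, Function.notMem_support.mp (Set.disjoint_left.mp h hf)]

namespace SimpleGraph

variable {V : Type*} {G : SimpleGraph V}

namespace Walk

theorem disjoint_edges_of_forall_mem_support_eq {u v u' v' a : V} {p : G.Walk u v}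
    {q : G.Walk u' v'} (h : ∀ x ∈ p.support, x ∈ q.support → x = a) :
    p.edges.Disjoint q.edges := by
  rintro ⟨x, y⟩ hp hq
  exact (p.adj_of_mem_edges hp).ne <|
    (h x (p.fst_mem_support_of_mem_edges hp) (q.fst_mem_support_of_mem_edges hq)).trans
      (h y (p.snd_mem_support_of_mem_edges hp) (q.snd_mem_support_of_mem_edges hq)).symm

theorem IsPath.start_notMem_tail_support {u v : V} {p : G.Walk u v} (hp : p.IsPath) :
    u ∉ p.support.tail := by
  have := hp.support_nodup
  rw [← p.cons_tail_support] at this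
  exact (List.nodup_cons.mp this).1

theorem IsPath.isCycle_append_of_disjoint {a b : V} {p : G.Walk a b} {q : G.Walk b a}
    (hp : p.IsPath) (hq : q.IsPath) (hab : a ≠ b)
    (hsupp : ∀ x ∈ p.support, x ∈ q.support → x = a ∨ x = b)
    (hedges : p.edges.Disjoint q.edges) : (p.append q).IsCycle := by
  refine hp.isCycle_append hq (fun x hxp hxq => ?_) ?_
  · rcases hsupp x (List.mem_of_mem_tail hxp) (List.mem_of_mem_tail hxq) with rfl | rfl
    · exact hp.start_notMem_tail_support hxp
    · exact hq.start_notMem_tail_support hxq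
  · by_contra! hlen
    have mem_edges : ∀ {x y : V} (r : G.Walk x y), x ≠ y → r.length ≤ 1 → s(x, y) ∈ r.edges := by
      rintro x y (_ | ⟨_, _ | _⟩) hxy hr <;> simp_all
    exact hedges (mem_edges p hab hlen.1) (Sym2.eq_swap ▸ mem_edges q hab.symm hlen.2)

/-- Of the two arcs into which `w` and `z` cut `C`, the one whose length has the parity of `R`
closes up with `R` into an even cycle. -/
theorem IsCycle.exists_even_isCycle_of_isPath [DecidableEq V] {z w : V} {C : G.Walk z z}
    (hC : C.IsCycle) (hodd : Odd C.length) (hw : w ∈ C.support) (hwz : w ≠ z)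
    {R : G.Walk w z} (hR : R.IsPath) (hRC : ∀ x ∈ R.support, x ∈ C.support → x = w ∨ x = z)
    (hRCe : R.edges.Disjoint C.edges) :
    ∃ (a : V) (c : G.Walk a a), c.IsCycle ∧ Even c.length ∧
      ∀ e ∈ c.edges, e ∈ C.edges ∨ e ∈ R.edges := by
  set A₁ := C.takeUntil w hw
  set A₂ := C.dropUntil w hw
  have hspec : A₁.append A₂ = C := C.take_spec hw
  have hA₁ : A₁.IsPath := hC.isPath_takeUntil hw
  have hA₂ : A₂.IsPath := (hspec ▸ hC).isPath_of_append_right (not_nil_of_ne hwz.symm)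
  have hlen : A₁.length + A₂.length = C.length := by rw [← length_append, hspec]
  have hA₁s := C.support_takeUntil_subset_support hw
  have hA₂s := C.support_dropUntil_subset_support hw
  have hA₁e := C.edges_takeUntil_subset_edges hw
  have hA₂e := C.edges_dropUntil_subset_edges hw
  rcases Nat.even_or_odd (A₁.length + R.length) with heven | hodd'
  · refine ⟨z, A₁.append R, hA₁.isCycle_append_of_disjoint hR hwz.symm ?_ ?_, ?_, ?_⟩
    · exact fun x hx hxR => (hRC x hxR (hA₁s hx)).symm
    · exact fun e he heR => hRCe heR (hA₁e he)
    · rwa [length_append]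
    · intro e he
      rcases List.mem_append.mp (edges_append _ _ ▸ he) with he | he
      exacts [.inl (hA₁e he), .inr he]
  · refine ⟨w, A₂.append R.reverse, hA₂.isCycle_append_of_disjoint hR.reverse hwz ?_ ?_, ?_, ?_⟩
    · exact fun x hx hxR => hRC x (by simpa using hxR) (hA₂s hx)
    · exact fun e he heR => hRCe (by simpa using heR) (hA₂e he)
    · rw [length_append, length_reverse]
      rw [← hlen] at hodd
      grind
    · intro e he
      rcases List.mem_append.mp (edges_append _ _ ▸ he) with he | he
      exacts [.inl (hA₂e he), .inr (by simpa using he)]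

theorem IsCycle.eq_snd_or_eq_penultimate_of_mem_edges {u w : V} {c : G.Walk u u}
    (hc : c.IsCycle) (h : s(u, w) ∈ c.edges) : w = c.snd ∨ w = c.penultimate := by
  cases c with
  | nil => simp at h
  | cons hadj p =>
    rw [cons_isCycle_iff] at hc
    rw [edges_cons, List.mem_cons] at h
    rcases h with h | h
    · rw [snd_cons]
      exact .inl (Sym2.congr_right.mp h)
    · rw [penultimate_cons_of_not_nil _ _ (not_nil_of_ne hadj.ne.symm)]
      exact .inr (hc.1.eq_penultimate_of_mem_edges h)

theorem isChain_edges_cons {R : Sym2 V → Sym2 V → Prop} {u v w : V} {p : G.Walk u v}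
    (hp : p.edges.IsChain R) (hnil : ¬p.Nil) (h : G.Adj w u) (hR : R s(w, u) s(u, p.snd)) :
    (cons h p).edges.IsChain R := by
  refine hp.cons fun e he => ?_
  rw [List.head?_eq_some_head (edges_eq_nil.not.mpr hnil), Option.mem_some_iff,
    head_edges_eq_mk_start_snd] at he
  exact he ▸ hR

end Walk

open Walk

def vertexSum (G : SimpleGraph V) [DecidableEq V] [Fintype G.edgeSet] :
    (Sym2 V → ℝ) →ₗ[ℝ] V → ℝ where
  toFun f v := ∑ e ∈ G.edgeFinset, if v ∈ e then f e else 0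
  map_add' f g := by
    ext v
    simp only [Pi.add_apply, ← Finset.sum_add_distrib]
    exact Finset.sum_congr rfl fun e _ => by split_ifs <;> simp
  map_smul' c f := by
    ext v
    simp only [Pi.smul_apply, smul_eq_mul, RingHom.id_apply, Finset.mul_sum]
    exact Finset.sum_congr rfl fun e _ => by split_ifs <;> simp

def Walk.alternatingWeight [DecidableEq V] : {u v : V} → G.Walk u v → Sym2 V → ℝ
  | _, _, nil => 0
  | _, _, cons (u := u) (v := w) _ p => Pi.single s(u, w) 1 - p.alternatingWeight

section VertexSum

variable [DecidableEq V]

theorem Walk.IsTrail.support_alternatingWeight {u v : V} {p : G.Walk u v} (hp : p.IsTrail) :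
    Function.support p.alternatingWeight = {e | e ∈ p.edges} := by
  induction p with
  | nil => simp [alternatingWeight]
  | @cons a b _ h p ih =>
    rw [isTrail_cons] at hp
    have hp' := Set.ext_iff.mp (ih hp.1)
    ext e
    by_cases he : e = s(a, b)
    · subst he
      have : p.alternatingWeight _ = 0 := Function.notMem_support.mp ((hp' _).not.mpr hp.2)
      simp [alternatingWeight, this]
    · simpa [alternatingWeight, he] using hp' e

variable [Fintype G.edgeSet]

theorem vertexSum_apply (f : Sym2 V → ℝ) (v : V) :
    vertexSum G f v = ∑ e ∈ G.edgeFinset, if v ∈ e then f e else 0 := rfl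

theorem vertexSum_single {u w : V} (h : G.Adj u w) :
    vertexSum G (Pi.single s(u, w) 1) = Pi.single u 1 + Pi.single w 1 := by
  ext v
  have hmem : s(u, w) ∈ G.edgeFinset := G.mem_edgeFinset.mpr h
  rw [vertexSum_apply, Finset.sum_eq_single_of_mem _ hmem fun e _ he => by simp [he]]
  rcases eq_or_ne v u with rfl | hu
  · simp [h.ne]
  · simp [Pi.single_apply, hu]

theorem vertexSum_alternatingWeight {u v : V} (p : G.Walk u v) :
    vertexSum G p.alternatingWeight = Pi.single u 1 + (-1) ^ (p.length + 1) • Pi.single v 1 := by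
  induction p with
  | nil => simp [alternatingWeight]
  | cons h p ih =>
    rw [alternatingWeight, map_sub, ih, vertexSum_single h, length_cons, pow_succ]
    module

theorem vertexSum_alternatingWeight_of_even {u : V} {c : G.Walk u u} (h : Even c.length) :
    vertexSum G c.alternatingWeight = 0 := by
  rw [vertexSum_alternatingWeight, h.add_one.neg_one_pow, neg_one_smul, add_neg_cancel]

theorem vertexSum_alternatingWeight_of_odd {u : V} {c : G.Walk u u} (h : Odd c.length) :
    vertexSum G c.alternatingWeight = (2 : ℝ) • Pi.single u 1 := by
  rw [vertexSum_alternatingWeight, h.add_one.neg_one_pow, one_smul, two_smul]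

theorem exists_adj_mul_neg_of_vertexSum_eq_zero {f : Sym2 V → ℝ} (hf : vertexSum G f = 0)
    {v : V} {e : Sym2 V} (he : e ∈ G.edgeSet) (hv : v ∈ e) (hfe : f e ≠ 0) :
    ∃ w, G.Adj v w ∧ f s(v, w) * f e < 0 := by
  -- otherwise all terms of `vertexSum G f v * f e` are `≥ 0`, and the one at `e` is `> 0`
  by_contra! h
  have hsum : ∑ e' ∈ G.edgeFinset, (if v ∈ e' then f e' * f e else 0) = 0 := by
    simp only [← ite_zero_mul, ← Finset.sum_mul, ← vertexSum_apply, hf, Pi.zero_apply, zero_mul]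
  have hnonneg : ∀ e' ∈ G.edgeFinset, 0 ≤ if v ∈ e' then f e' * f e else 0 := by
    intro e' he'
    split_ifs with hv'
    · obtain ⟨w, rfl⟩ := Sym2.mem_iff_exists.mp hv'
      exact h w (G.mem_edgeFinset.mp he')
    · exact le_rfl
  have := (Finset.sum_eq_zero_iff_of_nonneg hnonneg).mp hsum e (G.mem_edgeFinset.mpr he)
  rw [if_pos hv] at this
  exact hfe (mul_self_eq_zero.mp this)

end VertexSum

inductive IsMergerGenerator (G : SimpleGraph V) : Set (Sym2 V) → Prop
  | evenCycle {a : V} (c : G.Walk a a) : c.IsCycle → Even c.length →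
      IsMergerGenerator G {e | e ∈ c.edges}
  | oddCyclesSharingVertex {a : V} (c₁ c₂ : G.Walk a a) : c₁.IsCycle → c₂.IsCycle →
      Odd c₁.length → Odd c₂.length → (∀ x ∈ c₁.support, x ∈ c₂.support → x = a) →
      IsMergerGenerator G {e | e ∈ c₁.edges ∨ e ∈ c₂.edges}
  | oddCyclesJoinedByPath {a b : V} (c₁ : G.Walk a a) (c₂ : G.Walk b b) (p : G.Walk a b) :
      c₁.IsCycle → c₂.IsCycle → Odd c₁.length → Odd c₂.length → p.IsPath →
      (∀ x ∈ c₁.support, x ∉ c₂.support) → (∀ x ∈ p.support, x ∈ c₁.support → x = a) →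
      (∀ x ∈ p.support, x ∈ c₂.support → x = b) →
      IsMergerGenerator G {e | e ∈ c₁.edges ∨ e ∈ c₂.edges ∨ e ∈ p.edges}

theorem exists_isMergerGenerator_mem_iff {e : Sym2 V} :
    (∃ E, G.IsMergerGenerator E ∧ e ∈ E) ↔ LiesOnEvenCycle G e ∨
      LiesOnTwoOddCyclesSharingAVertex G e ∨ LiesOnTwoOddCyclesJoinedByAPath G e := by
  constructor
  · rintro ⟨_, ⟨c, hc, hev⟩ | ⟨c₁, c₂, h₁, h₂, ho₁, ho₂, hs⟩ |
      ⟨c₁, c₂, p, h₁, h₂, ho₁, ho₂, hp, hd, hs₁, hs₂⟩, he⟩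
    · exact .inl ⟨_, c, hc, hev, he⟩
    · exact .inr <| .inl ⟨_, c₁, c₂, h₁, h₂, ho₁, ho₂, hs,
        fun _ h₁ h₂ => disjoint_edges_of_forall_mem_support_eq hs h₁ h₂, he⟩
    · exact .inr <| .inr ⟨_, _, c₁, c₂, p, h₁, h₂, ho₁, ho₂, hp, hd, hs₁, hs₂, he⟩
  · rintro (⟨_, c, hc, hev, he⟩ | ⟨_, c₁, c₂, h₁, h₂, ho₁, ho₂, hs, -, he⟩ |
      ⟨_, _, c₁, c₂, p, h₁, h₂, ho₁, ho₂, hp, hd, hs₁, hs₂, he⟩)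
    · exact ⟨_, .evenCycle c hc hev, he⟩
    · exact ⟨_, .oddCyclesSharingVertex c₁ c₂ h₁ h₂ ho₁ ho₂ hs, he⟩
    · exact ⟨_, .oddCyclesJoinedByPath c₁ c₂ p h₁ h₂ ho₁ ho₂ hp hd hs₁ hs₂, he⟩

namespace IsMergerGenerator

variable {E : Set (Sym2 V)}

theorem nonempty (h : G.IsMergerGenerator E) : E.Nonempty := by
  obtain ⟨c, hc, -⟩ | ⟨c, -, hc, -⟩ | ⟨c, -, -, hc, -⟩ := h
  · exact ⟨_, mk_start_snd_mem_edges hc.not_nil⟩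
  · exact ⟨_, .inl (mk_start_snd_mem_edges hc.not_nil)⟩
  · exact ⟨_, .inl (mk_start_snd_mem_edges hc.not_nil)⟩

theorem subset_edgeSet (h : G.IsMergerGenerator E) : E ⊆ G.edgeSet := by
  obtain ⟨c, -⟩ | ⟨c₁, c₂, -⟩ | ⟨c₁, c₂, p, -⟩ := h <;> rintro e he
  · exact c.edges_subset_edgeSet he
  · rcases he with he | he <;> exact edges_subset_edgeSet _ he
  · rcases he with he | he | he <;> exact edges_subset_edgeSet _ he

theorem exists_support_eq [DecidableEq V] [Fintype G.edgeSet] (h : G.IsMergerGenerator E) :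
    ∃ g : Sym2 V → ℝ, vertexSum G g = 0 ∧ Function.support g = E := by
  have disj {u v u' v' : V} {p : G.Walk u v} {q : G.Walk u' v'} (a : V)
      (h : ∀ x ∈ p.support, x ∈ q.support → x = a) :
      Disjoint {e | e ∈ p.edges} {e | e ∈ q.edges} :=
    Set.disjoint_left.mpr fun _ h₁ h₂ => disjoint_edges_of_forall_mem_support_eq h h₁ h₂
  obtain ⟨c, hc, hev⟩ | ⟨c₁, c₂, h₁, h₂, ho₁, ho₂, hs⟩ |
    @⟨a, b, c₁, c₂, p, h₁, h₂, ho₁, ho₂, hp, hd, hs₁, hs₂⟩ := h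
  · exact ⟨_, vertexSum_alternatingWeight_of_even hev, hc.isTrail.support_alternatingWeight⟩
  · refine ⟨c₁.alternatingWeight + (-1 : ℝ) • c₂.alternatingWeight, ?_, ?_⟩
    · simp [vertexSum_alternatingWeight_of_odd ho₁, vertexSum_alternatingWeight_of_odd ho₂]
    · rw [Function.support_add_of_disjoint] <;>
        rw [Function.support_const_smul_of_ne_zero _ _ (by norm_num),
          h₁.isTrail.support_alternatingWeight, h₂.isTrail.support_alternatingWeight]
      · rfl
      · exact disj _ hs
  · set σ : ℝ := (-1) ^ (p.length + 1)
    have hσ : σ ≠ 0 := pow_ne_zero _ (by norm_num)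
    refine ⟨(c₁.alternatingWeight + σ • c₂.alternatingWeight) + (-2 : ℝ) • p.alternatingWeight,
      ?_, ?_⟩
    · simp only [map_add, map_smul, vertexSum_alternatingWeight_of_odd ho₁,
        vertexSum_alternatingWeight_of_odd ho₂, vertexSum_alternatingWeight]
      module
    have h₁₂ : Disjoint {e | e ∈ c₁.edges} {e | e ∈ c₂.edges} :=
      disj a fun x hx hx' => absurd hx' (hd x hx)
    have hS₁₂ : Function.support (c₁.alternatingWeight + σ • c₂.alternatingWeight) =
        {e | e ∈ c₁.edges} ∪ {e | e ∈ c₂.edges} := by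
      rw [Function.support_add_of_disjoint] <;>
        rw [Function.support_const_smul_of_ne_zero _ _ hσ, h₁.isTrail.support_alternatingWeight,
          h₂.isTrail.support_alternatingWeight]
      exact h₁₂
    rw [Function.support_add_of_disjoint] <;>
      rw [hS₁₂, Function.support_const_smul_of_ne_zero _ _ (by norm_num),
        hp.isTrail.support_alternatingWeight]
    · rw [Set.union_assoc]
      rfl
    · exact Set.disjoint_union_left.mpr ⟨(disj _ hs₁).symm, (disj _ hs₂).symm⟩

end IsMergerGenerator

theorem exists_isMergerGenerator_of_odd_isCycle_of_isPath [DecidableEq V] {z u w : V}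
    {C : G.Walk z z} (hC : C.IsCycle) (hodd : Odd C.length) {Q : G.Walk u z} (hQ : Q.IsPath)
    (hQC : ∀ x ∈ Q.support, x ∈ C.support → x = z) (huw : G.Adj u w) (hwQ : w ∈ Q.support)
    (huwQ : s(u, w) ∉ Q.edges) :
    ∃ E, G.IsMergerGenerator E ∧ E ⊆ {e | e ∈ C.edges ∨ e ∈ Q.edges ∨ e = s(u, w)} := by
  set T := Q.takeUntil w hwQ
  set C' := cons huw.symm T
  have hC' : C'.IsCycle := (cons_isCycle_iff T huw.symm).mpr
    ⟨hQ.takeUntil hwQ, fun h => huwQ (Q.edges_takeUntil_subset_edges hwQ (Sym2.eq_swap ▸ h))⟩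
  have hC'E : ∀ e ∈ C'.edges, e ∈ Q.edges ∨ e = s(u, w) := by
    simpa [C', Sym2.eq_swap] using fun e he => .inl (Q.edges_takeUntil_subset_edges hwQ he)
  have hC'Q : ∀ x ∈ C'.support, x ∈ Q.support := by
    simpa [C', hwQ] using fun x hx => Q.support_takeUntil_subset_support hwQ hx
  rcases Nat.even_or_odd C'.length with hev | hodd'
  · exact ⟨_, .evenCycle C' hC' hev, fun e he => .inr (hC'E e he)⟩
  by_cases hwz : w = z
  · subst hwz
    exact ⟨_, .oddCyclesSharingVertex C' C hC' hC hodd' hodd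
      (fun x hx hxC => hQC x (hC'Q x hx) hxC), fun e he => he.symm.imp id (hC'E e)⟩
  set D := Q.dropUntil w hwQ
  refine ⟨_, .oddCyclesJoinedByPath C' C D hC' hC hodd' hodd (hQ.dropUntil hwQ) ?_ ?_ ?_,
    fun e he => ?_⟩
  · intro x hx hxC
    obtain rfl := hQC x (hC'Q x hx) hxC
    rw [support_cons, List.mem_cons] at hx
    exact hx.elim (Ne.symm hwz) (endpoint_notMem_support_takeUntil hQ hwQ (Ne.symm hwz))
  · intro x hxD hx
    rw [support_cons, List.mem_cons] at hx
    by_contra hxw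
    exact ((Q.take_spec hwQ ▸ hQ).ne_of_mem_support_of_append hxw (hx.resolve_left hxw) hxD) rfl
  · exact fun x hx hxC => hQC x (Q.support_dropUntil_subset_support hwQ hx) hxC
  · rcases he with he | he | he
    exacts [.inr (hC'E e he), .inl he, .inr (.inl (Q.edges_dropUntil_subset_edges hwQ he))]

theorem exists_isPath_forall_adj_mem_support_or_mem [Fintype V] {S : Set (Sym2 V)} {A : Set V}
    {z y : V} (hzy : G.Adj z y) (hzyS : s(z, y) ∈ S) (hy : y ∉ A) :
    ∃ (u : V) (Q : G.Walk u z), Q.IsPath ∧ ¬Q.Nil ∧ (∀ e ∈ Q.edges, e ∈ S) ∧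
      (∀ x ∈ Q.support, x ∈ A → x = z) ∧
      ∀ w, G.Adj u w → s(u, w) ∈ S → w ∈ Q.support ∨ (w ∈ A ∧ w ≠ z) := by
  let 𝒬 : Set (Σ u, G.Walk u z) := {Q | Q.2.IsPath ∧ ¬Q.2.Nil ∧ (∀ e ∈ Q.2.edges, e ∈ S) ∧
    ∀ x ∈ Q.2.support, x ∈ A → x = z}
  obtain ⟨⟨u, Q⟩, ⟨hQ, hQnil, hQS, hQA⟩, hmax⟩ :=
    Set.Finite.exists_maximalFor' (fun Q => Q.2.length) 𝒬
      ((Set.finite_Iio (Fintype.card V)).subset (by rintro _ ⟨Q, hQ, rfl⟩; exact hQ.1.length_lt))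
      ⟨⟨y, hzy.symm.toWalk⟩, hzy.symm.isPath_toWalk, by simp, by simpa [Sym2.eq_swap] using hzyS,
        by simpa using fun h => absurd h hy⟩
  refine ⟨u, Q, hQ, hQnil, hQS, hQA, fun w huw huwS => ?_⟩
  by_contra! hcon
  have := hmax (j := ⟨w, cons huw.symm Q⟩)
    ⟨(cons_isPath_iff _ _).mpr ⟨hQ, hcon.1⟩, not_nil_cons, ?_, ?_⟩ (by simp)
  · simp at this
  · simpa [Sym2.eq_swap, huwS] using hQS
  · simpa using ⟨hcon.2, hQA⟩

theorem exists_isMergerGenerator_subset_of_odd_isCycle [DecidableEq V] [Fintype V]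
    {S : Set (Sym2 V)}
    (hS : ∀ ⦃u v⦄, G.Adj u v → s(u, v) ∈ S → ∃ w, G.Adj u w ∧ s(u, w) ∈ S ∧ w ≠ v)
    {z y : V} {C : G.Walk z z} (hC : C.IsCycle) (hodd : Odd C.length)
    (hCS : ∀ e ∈ C.edges, e ∈ S) (hzy : G.Adj z y) (hzyS : s(z, y) ∈ S)
    (hzyC : s(z, y) ∉ C.edges) :
    ∃ E, G.IsMergerGenerator E ∧ E ⊆ S := by
  have of_chord {w : V} (hw : w ∈ C.support) (hwz : w ≠ z) (R : G.Walk w z) (hR : R.IsPath)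
      (hRC : ∀ x ∈ R.support, x ∈ C.support → x = w ∨ x = z)
      (hRCe : R.edges.Disjoint C.edges) (hRS : ∀ e ∈ R.edges, e ∈ S) :
      ∃ E, G.IsMergerGenerator E ∧ E ⊆ S := by
    obtain ⟨a, c, hc, hev, hce⟩ := hC.exists_even_isCycle_of_isPath hodd hw hwz hR hRC hRCe
    exact ⟨_, .evenCycle c hc hev, fun e he => (hce e he).elim (hCS e) (hRS e)⟩
  by_cases hy : y ∈ C.support
  · refine of_chord hy hzy.ne.symm hzy.symm.toWalk hzy.symm.isPath_toWalk (by simp) ?_ ?_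
    · simpa [Sym2.eq_swap] using hzyC
    · simpa [Sym2.eq_swap] using hzyS
  obtain ⟨u, Q, hQ, hQnil, hQS, hQC, hmax⟩ :=
    exists_isPath_forall_adj_mem_support_or_mem (A := {x | x ∈ C.support}) hzy hzyS hy
  have huC : u ∉ C.support := fun h => hQnil <| by
    obtain rfl := hQC u Q.start_mem_support h
    exact isPath_iff_nil.mp hQ
  obtain ⟨w, huw, huwS, hw⟩ := hS (Q.adj_snd hQnil) (hQS _ (mk_start_snd_mem_edges hQnil))
  have huwQ : s(u, w) ∉ Q.edges := fun h => hw (hQ.eq_snd_of_mem_edges h)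
  rcases hmax w huw huwS with hwQ | ⟨hwC, hwz⟩
  · obtain ⟨E, hE, hEsub⟩ :=
      exists_isMergerGenerator_of_odd_isCycle_of_isPath hC hodd hQ hQC huw hwQ huwQ
    refine ⟨E, hE, fun e he => ?_⟩
    rcases hEsub he with he | he | rfl
    exacts [hCS e he, hQS e he, huwS]
  · refine of_chord hwC hwz (cons huw.symm Q) ((cons_isPath_iff _ _).mpr ⟨hQ, ?_⟩) ?_ ?_ ?_
    · exact fun h => hwz (hQC w h hwC)
    · simpa using fun x hx hxC => Or.inr (hQC x hx hxC)
    · rintro e he heC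
      rw [edges_cons, List.mem_cons] at he
      rcases he with rfl | he
      · exact huC (C.snd_mem_support_of_mem_edges heC)
      · exact disjoint_edges_of_forall_mem_support_eq hQC he heC
    · simpa [Sym2.eq_swap, huwS] using hQS

theorem exists_isCycle_isChain_edges_of_vertexSum_eq_zero [DecidableEq V] [Fintype V]
    [DecidableRel G.Adj] {f : Sym2 V → ℝ} (hf : vertexSum G f = 0) {u v : V} (huv : G.Adj u v)
    (hfuv : f s(u, v) ≠ 0) :
    ∃ (z : V) (C : G.Walk z z), C.IsCycle ∧ (∀ e ∈ C.edges, f e ≠ 0) ∧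
      C.edges.IsChain (fun e e' => f e * f e' < 0) := by
  let 𝒜 : Set (Σ x y, G.Walk x y) := {P | P.2.2.IsPath ∧ ¬P.2.2.Nil ∧
    (∀ e ∈ P.2.2.edges, f e ≠ 0) ∧ P.2.2.edges.IsChain (fun e e' => f e * f e' < 0)}
  obtain ⟨⟨x, y, P⟩, ⟨hP, hPnil, hPf, hPalt⟩, hmax⟩ :=
    Set.Finite.exists_maximalFor' (fun P => P.2.2.length) 𝒜
      ((Set.finite_Iio (Fintype.card V)).subset (by rintro _ ⟨P, hP, rfl⟩; exact hP.1.length_lt))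
      ⟨⟨u, v, huv.toWalk⟩, huv.isPath_toWalk, by simp, by simpa using hfuv, by simp⟩
  dsimp only at hP hPnil hPf hPalt
  obtain ⟨z, hxz, hsign⟩ := exists_adj_mul_neg_of_vertexSum_eq_zero hf (P.adj_snd hPnil)
    (Sym2.mem_mk_left _ _) (hPf _ (mk_start_snd_mem_edges hPnil))
  -- `P` is longest, so the edge `xz` leads back into `P`
  have hzP : z ∈ P.support := by
    by_contra hzP
    have := hmax (j := ⟨z, y, cons hxz.symm P⟩) ⟨(cons_isPath_iff _ _).mpr ⟨hP, hzP⟩,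
      not_nil_cons, ?_, isChain_edges_cons hPalt hPnil _ (by rwa [Sym2.eq_swap])⟩ (by simp)
    · simp at this
    · simpa [Sym2.eq_swap, left_ne_zero_of_mul hsign.ne] using hPf
  set t := P.takeUntil z hzP
  have htP : ∀ e ∈ t.edges, e ∈ P.edges := P.edges_takeUntil_subset_edges hzP
  have htnil : ¬t.Nil := not_nil_of_ne hxz.ne
  have htsnd : t.snd = P.snd := hP.eq_snd_of_mem_edges (htP _ (mk_start_snd_mem_edges htnil))
  have hzxt : s(z, x) ∉ t.edges := fun h => by
    have hz := hP.eq_snd_of_mem_edges (htP _ (Sym2.eq_swap ▸ h))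
    rw [← hz] at hsign
    exact (mul_self_nonneg _).not_gt hsign
  refine ⟨z, cons hxz.symm t, (cons_isCycle_iff t hxz.symm).mpr ⟨hP.takeUntil hzP, hzxt⟩, ?_,
    isChain_edges_cons (hPalt.prefix (P.edges_takeUntil_prefix_edges hzP)) htnil _
      (by rwa [htsnd, Sym2.eq_swap])⟩
  simpa [Sym2.eq_swap, left_ne_zero_of_mul hsign.ne] using fun e he => hPf e (htP e he)

/-- Going around an odd cycle whose consecutive edges alternate in sign, the first and the last
edge get the same sign, so the edge of opposite sign at the base vertex leaves the cycle. -/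
theorem exists_adj_notMem_edges_of_odd_isCycle [DecidableEq V] [Fintype G.edgeSet]
    {f : Sym2 V → ℝ} (hf : vertexSum G f = 0) {z : V} {C : G.Walk z z} (hC : C.IsCycle)
    (hodd : Odd C.length) (hCf : ∀ e ∈ C.edges, f e ≠ 0)
    (hCalt : C.edges.IsChain (fun e e' => f e * f e' < 0)) :
    ∃ y, G.Adj z y ∧ f s(z, y) ≠ 0 ∧ s(z, y) ∉ C.edges := by
  have hCnil : ¬C.Nil := hC.not_nil
  have hpos := hCalt.neg_one_pow_mul_pos f (edges_eq_nil.not.mpr hCnil) (hCf _ (List.head_mem _))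
  rw [length_edges, hodd.add_one.neg_one_pow, one_mul, head_edges_eq_mk_start_snd,
    getLast_edges_eq_mk_penultimate_end] at hpos
  obtain ⟨y, hzy, hsign⟩ := exists_adj_mul_neg_of_vertexSum_eq_zero hf (C.adj_penultimate hCnil)
    (Sym2.mem_mk_right _ _) (hCf _ (mk_penultimate_end_mem_edges hCnil))
  refine ⟨y, hzy, left_ne_zero_of_mul hsign.ne, fun hmem => ?_⟩
  rcases hC.eq_snd_or_eq_penultimate_of_mem_edges hmem with rfl | rfl
  · linarith
  · rw [Sym2.eq_swap] at hsign
    exact (mul_self_nonneg _).not_gt hsign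

theorem exists_isMergerGenerator_subset_support [DecidableEq V] [Fintype V] [DecidableRel G.Adj]
    {f : Sym2 V → ℝ} (hf : vertexSum G f = 0) {u v : V} (huv : G.Adj u v)
    (hfuv : f s(u, v) ≠ 0) : ∃ E, G.IsMergerGenerator E ∧ E ⊆ Function.support f := by
  obtain ⟨z, C, hC, hCf, hCalt⟩ := exists_isCycle_isChain_edges_of_vertexSum_eq_zero hf huv hfuv
  rcases Nat.even_or_odd C.length with hev | hodd
  · exact ⟨_, .evenCycle C hC hev, hCf⟩
  obtain ⟨y, hzy, hfzy, hzyC⟩ := exists_adj_notMem_edges_of_odd_isCycle hf hC hodd hCf hCalt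
  refine exists_isMergerGenerator_subset_of_odd_isCycle (fun a b hab hfab => ?_) hC hodd hCf hzy
    hfzy hzyC
  obtain ⟨c, hac, hsign⟩ :=
    exists_adj_mul_neg_of_vertexSum_eq_zero hf hab (Sym2.mem_mk_left _ _) hfab
  refine ⟨c, hac, left_ne_zero_of_mul hsign.ne, ?_⟩
  rintro rfl
  exact (mul_self_nonneg _).not_gt hsign

theorem exists_isMergerGenerator_mem_of_vertexSum_eq_zero [DecidableEq V] [Fintype V]
    [DecidableRel G.Adj] {f : Sym2 V → ℝ} (hf : vertexSum G f = 0) {u v : V} (huv : G.Adj u v)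
    (hfuv : f s(u, v) ≠ 0) : ∃ E, G.IsMergerGenerator E ∧ s(u, v) ∈ E := by
  obtain ⟨E, hE, hEf⟩ := exists_isMergerGenerator_subset_support hf huv hfuv
  by_cases huvE : s(u, v) ∈ E
  · exact ⟨E, hE, huvE⟩
  obtain ⟨g, hg, hgE⟩ := hE.exists_support_eq
  obtain ⟨e₁, he₁⟩ := hE.nonempty
  have hge₁ : g e₁ ≠ 0 := Function.mem_support.mp (hgE ▸ he₁)
  have hgE' {e : Sym2 V} (he : e ∉ E) : g e = 0 := Function.notMem_support.mp (hgE ▸ he)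
  -- subtracting a multiple of `g` kills `e₁` without touching `s(u, v)`
  set f' := f - (f e₁ / g e₁) • g
  have hf' : vertexSum G f' = 0 := by simp [f', hf, hg]
  have hf'uv : f' s(u, v) = f s(u, v) := by simp [f', hgE' huvE]
  have hsupp : G.edgeFinset.filter (f' · ≠ 0) ⊂ G.edgeFinset.filter (f · ≠ 0) := by
    refine Finset.ssubset_iff_of_subset (fun e he => ?_) |>.mpr ⟨e₁, ?_, ?_⟩
    · rw [Finset.mem_filter] at he ⊢
      refine ⟨he.1, fun hfe => ?_⟩
      by_cases heE : e ∈ E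
      · exact hEf heE hfe
      · exact he.2 (by simp [f', hfe, hgE' heE])
    · exact Finset.mem_filter.mpr ⟨G.mem_edgeFinset.mpr (hE.subset_edgeSet he₁), hEf he₁⟩
    · simp [f', hge₁]
  exact exists_isMergerGenerator_mem_of_vertexSum_eq_zero hf' huv (hf'uv ▸ hfuv)
termination_by (G.edgeFinset.filter (f · ≠ 0)).card
decreasing_by exact Finset.card_lt_card hsupp

theorem exists_vertexSum_eq_zero_forall_ne_zero [DecidableEq V] [Fintype G.edgeSet]
    (h : ∀ e ∈ G.edgeSet, ∃ E, G.IsMergerGenerator E ∧ e ∈ E) :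
    ∃ f : Sym2 V → ℝ, vertexSum G f = 0 ∧ ∀ e ∈ G.edgeSet, f e ≠ 0 := by
  obtain ⟨f, hf, hf0⟩ := Module.Dual.exists_forall_mem_ne_zero_of_forall_exists
    (LinearMap.ker (vertexSum G)) (fun e : G.edgeSet => LinearMap.proj (R := ℝ) (e : Sym2 V))
    fun ⟨e, he⟩ => by
      obtain ⟨E, hE, heE⟩ := h e he
      obtain ⟨g, hg, hgE⟩ := hE.exists_support_eq
      exact ⟨g, hg, Function.mem_support.mp (hgE ▸ heE : e ∈ Function.support g)⟩
  exact ⟨f, hf, fun e he => hf0 ⟨e, he⟩⟩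

end SimpleGraph

/-- A nowhere-zero edge assignment whose unsigned sum at every vertex vanishes exists if
and only if every edge of the graph belongs to a merger generator subgraph. -/
theorem stmt_6 {V : Type*} [Fintype V] [DecidableEq V]
    (G : SimpleGraph V) [DecidableRel G.Adj] :
    (∃ f : Sym2 V → ℝ, (∀ e ∈ G.edgeFinset, f e ≠ 0) ∧
      ∀ v : V, ∑ e ∈ G.edgeFinset, (if v ∈ e then f e else 0) = 0) ↔
    (∀ e ∈ G.edgeSet, LiesOnEvenCycle G e ∨ LiesOnTwoOddCyclesSharingAVertex G e ∨
      LiesOnTwoOddCyclesJoinedByAPath G e) := by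
  simp only [← SimpleGraph.exists_isMergerGenerator_mem_iff]
  constructor
  · rintro ⟨f, hf0, hf⟩ ⟨u, v⟩ huv
    exact G.exists_isMergerGenerator_mem_of_vertexSum_eq_zero (funext hf) huv
      (hf0 _ (G.mem_edgeFinset.mpr huv))
  · intro h
    obtain ⟨f, hf, hf0⟩ := G.exists_vertexSum_eq_zero_forall_ne_zero h
    exact ⟨f, fun e he => hf0 e (G.mem_edgeFinset.mp he), congrFun hf⟩
end

section
/- Let N ≥ 1 and 1 ≤ p ≤ N be integers. For a composition (n₁,…,n_p) of N (i.e., positive integers with n₁ + ⋯ + n_p = N) set N_l = n₁ + ⋯ + n_l and N₀ = 0. Then Σ over all compositions (n₁,…,n_p) of N of ∏_{l=0}^{p−1} 1/(N − N_l) equals c(N,p)/N!, where c(N,p) is the number of permutations of an N-element set having exactly p orbits (cycles, with fixed points counted as cycles of length 1). In other words, this sum equals the fraction of permutations of S_N built up from exactly p cycles. -/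
/-!
Both sides, as functions `x n k` of `N = n` and `p = k`, have the initial values of
`c(n, k) / n!` and satisfy its recurrence `(n + 1) x (n + 1) (k + 1) = x n k + n x n (k + 1)`.

Permutations of `Option α` decompose as `swap none i * e.optionCongr` (`Perm.decomposeOption`):
for `i = none` the point `none` is a new fixed point, and for `i = some b` it is inserted into
the cycle of `e` through `b`, so the number of orbits goes up by one or stays the same.

Since `N - N_l` is the sum of the blocks from `l` on, the weight of a composition is the product
of the inverses of the sums of its nonempty suffixes. A composition of `n + 1` either starts with
a block `1`, whose removal multiplies the weight by `n + 1`, or has a first block `a ≥ 2`, whose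
replacement by `a - 1` multiplies the weight by `(n + 1) / n`.
-/

open Finset

/-- The number of orbits (cycles, fixed points included) of a permutation `σ`. -/
noncomputable def permOrbitCount {α : Type*} (σ : Equiv.Perm α) : ℕ :=
  Nat.card (MulAction.orbitRel.Quotient (Subgroup.zpowers σ) α)

namespace Equiv.Perm

variable {α β Q : Type*}

theorem orbitRel_zpowers (σ : Perm α) :
    MulAction.orbitRel (Subgroup.zpowers σ) α = SameCycle.setoid σ := by
  ext x y
  rw [MulAction.orbitRel_apply, MulAction.mem_orbit_iff]
  change _ ↔ σ.SameCycle x y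
  rw [sameCycle_comm]
  exact ⟨fun ⟨⟨_, n, rfl⟩, h⟩ => ⟨n, h⟩,
    fun ⟨n, h⟩ => ⟨⟨σ ^ n, n, rfl⟩, h⟩⟩

theorem SameCycle.map_of_step {σ : Perm α} {τ : Perm β} (f : α → β)
    (hf : ∀ x, τ.SameCycle (f x) (f (σ x))) {x y : α} (hxy : σ.SameCycle x y) :
    τ.SameCycle (f x) (f y) := by
  obtain ⟨n, rfl⟩ := hxy
  induction n using Int.induction_on with
  | zero => rfl
  | succ n ih => rw [add_comm, zpow_one_add, mul_apply]; exact ih.trans (hf _)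
  | pred n ih =>
    have hstep : σ ((σ ^ (-(n : ℤ) - 1)) x) = (σ ^ (-(n : ℤ))) x := by
      rw [← mul_apply, ← zpow_one_add, add_sub_cancel]
    exact ih.trans (hstep ▸ hf _).symm

theorem permOrbitCount_eq_natCard (σ : Perm α) (f : α → Q) (hsurj : f.Surjective)
    (hσ : ∀ x, f (σ x) = f x) (hsame : ∀ x y, f x = f y → σ.SameCycle x y) :
    permOrbitCount σ = Nat.card Q := by
  have hconst : ∀ x y, σ.SameCycle x y → f x = f y := fun x y h => by
    simpa using h.map_of_step (τ := 1) f (fun x => by rw [sameCycle_one, hσ])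
  rw [permOrbitCount, MulAction.orbitRel.Quotient, orbitRel_zpowers]
  refine Nat.card_congr (Equiv.ofBijective (Quotient.lift f hconst) ⟨?_, ?_⟩)
  · rintro ⟨x⟩ ⟨y⟩ h
    exact Quotient.sound (hsame x y h)
  · intro q
    obtain ⟨x, rfl⟩ := hsurj q
    exact ⟨⟦x⟧, rfl⟩

theorem permOrbitCount_eq_card_quotient (σ : Perm α) :
    permOrbitCount σ = Nat.card (Quotient (SameCycle.setoid σ)) := by
  rw [permOrbitCount, MulAction.orbitRel.Quotient, orbitRel_zpowers]

theorem permOrbitCount_eq_of_surjective (σ : Perm α) (τ : Perm β) (f : α → β)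
    (hsurj : f.Surjective) (h : ∀ x y, σ.SameCycle x y ↔ τ.SameCycle (f x) (f y)) :
    permOrbitCount σ = permOrbitCount τ := by
  rw [permOrbitCount_eq_natCard σ (fun x => (⟦f x⟧ : Quotient (SameCycle.setoid τ)))
    (Quotient.mk_surjective.comp hsurj) (fun x => Quotient.sound ((h _ _).1 ⟨-1, by simp⟩))
    (fun x y hxy => (h x y).2 (Quotient.exact hxy)), permOrbitCount_eq_card_quotient]

theorem permOrbitCount_permCongr (e : α ≃ β) (σ : Perm α) :
    permOrbitCount (e.permCongr σ) = permOrbitCount σ := by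
  refine permOrbitCount_eq_of_surjective _ σ e.symm e.symm.surjective fun x y => ?_
  have hpow (n : ℤ) : e.permCongr σ ^ n = e.permCongr (σ ^ n) := by
    rw [← permCongrHom_coe]; exact (map_zpow _ σ n).symm
  simp only [SameCycle, hpow, permCongr_apply, ← e.eq_symm_apply]

theorem permOrbitCount_pos [Finite α] [Nonempty α] (σ : Perm α) : 0 < permOrbitCount σ := by
  rw [permOrbitCount_eq_card_quotient]
  have : Nonempty (Quotient (SameCycle.setoid σ)) := ⟨⟦Classical.arbitrary α⟧⟩
  exact Nat.card_pos

theorem permOrbitCount_eq_zero [IsEmpty α] (σ : Perm α) : permOrbitCount σ = 0 := by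
  rw [permOrbitCount_eq_card_quotient]
  exact Nat.card_of_isEmpty

theorem permOrbitCount_optionCongr [Finite α] (e : Perm α) :
    permOrbitCount e.optionCongr = permOrbitCount e + 1 := by
  have hsome : ∀ x y, e.SameCycle x y → SameCycle e.optionCongr (some x) (some y) :=
    fun x y => SameCycle.map_of_step some fun x => ⟨1, rfl⟩
  rw [permOrbitCount_eq_natCard e.optionCongr
    (Option.map (fun x => (⟦x⟧ : Quotient (SameCycle.setoid e)))) ?_ ?_ ?_, Finite.card_option,
    permOrbitCount_eq_card_quotient]
  · rintro (_ | ⟨⟨x⟩⟩)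
    exacts [⟨none, rfl⟩, ⟨some x, rfl⟩]
  · rintro (_ | x)
    exacts [rfl, congrArg some (Quotient.sound ⟨-1, by simp⟩)]
  · rintro (_ | x) (_ | y) h <;> simp only [Option.map_none, Option.map_some, reduceCtorEq,
      Option.some.injEq] at h
    exacts [SameCycle.rfl, hsome x y (Quotient.exact h)]

theorem permOrbitCount_swap_mul_optionCongr [DecidableEq α] (b : α) (e : Perm α) :
    permOrbitCount (swap none (some b) * e.optionCongr) = permOrbitCount e := by
  set σ := swap none (some b) * e.optionCongr
  have hnone : σ none = some b := by simp [σ]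
  have hsome : ∀ x, σ (some x) = if e x = b then none else some (e x) := fun x => by
    split_ifs with h
    · simp [σ, h]
    · simp [σ, swap_apply_of_ne_of_ne, h]
  have hstep : ∀ x, σ.SameCycle (some x) (some (e x)) := fun x => by
    by_cases h : e x = b
    · exact ⟨2, by rw [zpow_two, mul_apply, hsome, if_pos h, hnone, h]⟩
    · exact ⟨1, by rw [zpow_one, hsome, if_neg h]⟩
  let r : Option α → α := fun o => o.elim b id
  have hret : ∀ u, σ.SameCycle u (some (r u)) := by
    rintro (_ | x)
    exacts [⟨1, hnone⟩, SameCycle.rfl]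
  refine permOrbitCount_eq_of_surjective σ e r (fun x => ⟨some x, rfl⟩)
    fun u v => ⟨SameCycle.map_of_step r ?_, fun h => ?_⟩
  · rintro (_ | x)
    · simp only [r, hnone]; rfl
    · simp only [r, hsome]
      split_ifs with h
      exacts [⟨1, h⟩, ⟨1, rfl⟩]
  · exact (hret u).trans ((SameCycle.map_of_step some hstep h).trans (hret v).symm)

theorem card_permOrbitCount_option_succ [Finite α] (k : ℕ) :
    Nat.card {σ : Perm (Option α) // permOrbitCount σ = k + 1} =
      Nat.card α * Nat.card {e : Perm α // permOrbitCount e = k + 1} +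
        Nat.card {e : Perm α // permOrbitCount e = k} := by
  classical
  have := Fintype.ofFinite α
  calc Nat.card {σ : Perm (Option α) // permOrbitCount σ = k + 1}
      = Nat.card {x : Option α × Perm α // permOrbitCount (decomposeOption.symm x) = k + 1} :=
        Nat.card_congr (decomposeOption.subtypeEquiv fun σ => by rw [symm_apply_apply])
    _ = ∑ i, Nat.card {e // permOrbitCount (decomposeOption.symm (i, e)) = k + 1} := by
        rw [Nat.card_congr (subtypeProdEquivSigmaSubtype fun i e =>
          permOrbitCount (decomposeOption.symm (i, e)) = k + 1), Nat.card_sigma]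
    _ = _ := by
        simp only [Fintype.sum_option, decomposeOption_symm_apply, swap_self, ← one_def, one_mul,
          permOrbitCount_optionCongr, add_left_inj, permOrbitCount_swap_mul_optionCongr,
          Finset.sum_const, Finset.card_univ, smul_eq_mul, Nat.card_eq_fintype_card]
        ring

theorem card_permOrbitCount_eq_stirlingFirst (α : Type*) [Finite α] (k : ℕ) :
    Nat.card {σ : Perm α // permOrbitCount σ = k} = Nat.stirlingFirst (Nat.card α) k := by
  have := Fintype.ofFinite α
  revert k
  refine Fintype.induction_empty_option (P := fun α _ => ∀ k,
    Nat.card {σ : Perm α // permOrbitCount σ = k} = Nat.stirlingFirst (Nat.card α) k)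
    (fun α β _ e ih k => ?_) (fun k => ?_) (fun α _ ih k => ?_) α
  · rw [← Nat.card_congr e, ← ih k]
    exact (Nat.card_congr (e.permCongr.subtypeEquiv (p := fun σ => permOrbitCount σ = k)
      fun σ => by rw [permOrbitCount_permCongr])).symm
  · simp only [permOrbitCount_eq_zero, Nat.card_of_isEmpty]
    rcases k with _ | k <;> simp
  · rcases k with _ | k
    · have : IsEmpty {σ : Perm (Option α) // permOrbitCount σ = 0} :=
        ⟨fun σ => (permOrbitCount_pos σ.1).ne' σ.2⟩
      rw [Nat.card_of_isEmpty, Finite.card_option, Nat.stirlingFirst_succ_zero]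
    · rw [card_permOrbitCount_option_succ, ih, ih, Finite.card_option,
        Nat.stirlingFirst_succ_succ]

end Equiv.Perm

def tailSumInvProd : List ℕ → ℚ
  | [] => 1
  | a :: l => tailSumInvProd l / (a + l.sum)

theorem prod_range_length_inv_sub_take_sum (l : List ℕ) :
    ∏ i ∈ range l.length, (1 : ℚ) / ((l.sum : ℚ) - ((l.take i).sum : ℕ)) =
      tailSumInvProd l := by
  induction l with
  | nil => rfl
  | cons a l ih =>
    rw [tailSumInvProd, ← ih, List.length_cons, prod_range_succ']
    simp only [List.take_succ_cons, List.take_zero, List.sum_cons, List.sum_nil, Nat.cast_add,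
      Nat.cast_zero, add_sub_add_left_eq_sub, sub_zero]
    ring

namespace Composition

variable {n p : ℕ}

theorem prod_range_length_inv_sub_sizeUpTo (c : Composition n) :
    ∏ i ∈ range c.length, (1 : ℚ) / ((n : ℚ) - (c.sizeUpTo i : ℚ)) =
      tailSumInvProd c.blocks := by
  have h := prod_range_length_inv_sub_take_sum c.blocks
  rw [c.blocks_sum] at h
  exact h

def consOne (c : Composition n) : Composition (n + 1) where
  blocks := 1 :: c.blocks
  blocks_pos := by
    rintro i (_ | ⟨_, hi⟩)
    exacts [Nat.one_pos, c.blocks_pos hi]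
  blocks_sum := by rw [List.sum_cons, c.blocks_sum, add_comm]

def succHead (c : Composition n) (hc : c.blocks ≠ []) : Composition (n + 1) where
  blocks := (c.blocks.head hc + 1) :: c.blocks.tail
  blocks_pos := by
    rintro i (_ | ⟨_, hi⟩)
    exacts [Nat.succ_pos _, c.blocks_pos (List.mem_of_mem_tail hi)]
  blocks_sum := by
    rw [List.sum_cons, add_right_comm, ← List.sum_cons, List.cons_head_tail, c.blocks_sum]

theorem blocks_ne_nil_of_length_eq_succ {c : Composition n} (hc : c.length = p + 1) :
    c.blocks ≠ [] :=
  List.ne_nil_of_length_eq_add_one hc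

def consOneOrSuccHead (n p : ℕ) :
    {c : Composition n // c.length = p} ⊕ {c : Composition n // c.length = p + 1} →
      {c : Composition (n + 1) // c.length = p + 1} :=
  Sum.elim (fun c => ⟨c.1.consOne, by simp [consOne, length, c.2]⟩)
    fun c => ⟨c.1.succHead (blocks_ne_nil_of_length_eq_succ c.2), by
      have := c.2
      simp only [succHead, length, List.length_cons, List.length_tail] at this ⊢
      omega⟩

theorem consOneOrSuccHead_bijective (n p : ℕ) : (consOneOrSuccHead n p).Bijective := by
  refine ⟨Function.Injective.sumElim ?_ ?_ ?_, ?_⟩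
  · rintro c d h
    exact Subtype.ext (Composition.ext (List.cons_injective (congrArg (·.1.blocks) h)))
  · rintro c d h
    have h' := List.cons_eq_cons.mp (congrArg (·.1.blocks) h)
    refine Subtype.ext (Composition.ext ?_)
    rw [← List.cons_head_tail (blocks_ne_nil_of_length_eq_succ c.2),
      ← List.cons_head_tail (blocks_ne_nil_of_length_eq_succ d.2), Nat.succ_injective h'.1, h'.2]
  · rintro c d h
    have h' := (List.cons_eq_cons.mp (congrArg (·.1.blocks) h)).1
    have := d.1.blocks_pos (List.head_mem (blocks_ne_nil_of_length_eq_succ d.2))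
    omega
  · rintro ⟨⟨_ | ⟨a, t⟩, hpos, hsum⟩, hlen⟩
    · simp [length] at hlen
    have ha : 0 < a := hpos List.mem_cons_self
    have ht : ∀ {i}, i ∈ t → 0 < i := fun hi => hpos (List.mem_cons_of_mem a hi)
    have hsum' : a + t.sum = n + 1 := hsum
    have hlen' : t.length = p := Nat.succ_injective hlen
    by_cases ha1 : a = 1
    · subst ha1
      exact ⟨Sum.inl ⟨⟨t, ht, by omega⟩, hlen'⟩, rfl⟩
    · refine ⟨Sum.inr ⟨⟨(a - 1) :: t, ?_, ?_⟩, ?_⟩, ?_⟩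
      · rintro i (_ | ⟨_, hi⟩)
        exacts [by omega, ht hi]
      · rw [List.sum_cons]; omega
      · exact congrArg (· + 1) hlen'
      · simp only [consOneOrSuccHead, Sum.elim_inr, succHead, List.head_cons, List.tail_cons]
        congr
        omega

theorem tailSumInvProd_consOne (c : Composition n) :
    (n + 1) * tailSumInvProd c.consOne.blocks = tailSumInvProd c.blocks := by
  rw [consOne, tailSumInvProd, c.blocks_sum]
  push_cast
  field_simp
  ring

theorem tailSumInvProd_succHead (c : Composition n) (hc : c.blocks ≠ []) :
    (n + 1) * tailSumInvProd (c.succHead hc).blocks = n * tailSumInvProd c.blocks := by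
  set a := c.blocks.head hc
  set t := c.blocks.tail
  have hblocks : c.blocks = a :: t := (List.cons_head_tail hc).symm
  have hpos : 0 < a := c.blocks_pos (List.head_mem hc)
  have hn : (n : ℚ) = a + t.sum := by
    rw [← c.blocks_sum, hblocks, List.sum_cons]; push_cast; rfl
  change (n + 1) * tailSumInvProd ((a + 1) :: t) = n * tailSumInvProd c.blocks
  have hn0 : (a : ℚ) + t.sum ≠ 0 := by positivity
  rw [hblocks, tailSumInvProd, tailSumInvProd, hn, Nat.cast_add_one, add_right_comm]
  field_simp

end Composition

open Composition

def compositionSum (n p : ℕ) : ℚ :=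
  ∑ c : {c : Composition n // c.length = p}, tailSumInvProd c.1.blocks

theorem compositionSum_succ_succ (n p : ℕ) :
    (n + 1) * compositionSum (n + 1) (p + 1) =
      compositionSum n p + n * compositionSum n (p + 1) := by
  rw [compositionSum,
    ← Fintype.sum_bijective _ (consOneOrSuccHead_bijective n p) _ _ fun _ => rfl,
    Fintype.sum_sum_type, mul_add, mul_sum, mul_sum, compositionSum, compositionSum, mul_sum]
  congr 1
  · exact sum_congr rfl fun c _ => tailSumInvProd_consOne c.1
  · exact sum_congr rfl fun c _ => tailSumInvProd_succHead c.1 _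

theorem compositionSum_zero_zero : compositionSum 0 0 = 1 := by
  let : Unique {c : Composition 0 // c.length = 0} :=
    ⟨⟨⟨ones 0, rfl⟩⟩, fun c => Subtype.ext (eq_ones_iff_le_length.2 (Nat.zero_le _))⟩
  rw [compositionSum, Fintype.sum_unique]
  rfl

theorem compositionSum_eq_zero_of_lt {n p : ℕ} (h : n < p) : compositionSum n p = 0 := by
  have : IsEmpty {c : Composition n // c.length = p} :=
    ⟨fun c => (c.1.length_le.trans_lt h).ne c.2⟩
  rw [compositionSum, Fintype.sum_empty]

theorem compositionSum_succ_zero (n : ℕ) : compositionSum (n + 1) 0 = 0 := by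
  have : IsEmpty {c : Composition (n + 1) // c.length = 0} :=
    ⟨fun c => n.succ_ne_zero (c.1.length_eq_zero.1 c.2)⟩
  rw [compositionSum, Fintype.sum_empty]

theorem compositionSum_eq_stirlingFirst_div_factorial (n p : ℕ) :
    compositionSum n p = Nat.stirlingFirst n p / n.factorial := by
  induction n generalizing p with
  | zero =>
    rcases p with _ | p
    · simp [compositionSum_zero_zero]
    · simp [compositionSum_eq_zero_of_lt]
  | succ n ih =>
    rcases p with _ | p
    · simp [compositionSum_succ_zero]
    · have h := compositionSum_succ_succ n p
      rw [ih, ih] at h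
      have hf : (n.factorial : ℚ) ≠ 0 := by positivity
      rw [eq_div_iff (by positivity), Nat.stirlingFirst_succ_succ, Nat.factorial_succ]
      field_simp at h
      push_cast
      linear_combination h

theorem stmt_9_general (N p : ℕ) :
    (∑ c : {c : Composition N // c.length = p},
        ∏ l ∈ Finset.range p, (1 : ℚ) / ((N : ℚ) - ((c : Composition N).sizeUpTo l : ℚ)))
      = (Nat.card {σ : Equiv.Perm (Fin N) // permOrbitCount σ = p} : ℚ) /
        (N.factorial : ℚ) := by
  rw [Equiv.Perm.card_permOrbitCount_eq_stirlingFirst, Nat.card_fin,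
    ← compositionSum_eq_stirlingFirst_div_factorial]
  refine sum_congr rfl fun ⟨c, hc⟩ _ => ?_
  subst hc
  exact c.prod_range_length_inv_sub_sizeUpTo

/-- The sum over compositions `(n₁,…,n_p)` of `N` of `Π_{l=0}^{p-1} 1/(N - N_l)`,
where `N_l = n₁ + ⋯ + n_l`, equals the fraction of permutations of `S_N` built up from
exactly `p` cycles. -/
theorem stmt_9 (N p : ℕ) (hN : 1 ≤ N) (hp1 : 1 ≤ p) (hpN : p ≤ N) :
    (∑ c : {c : Composition N // c.length = p},
        ∏ l ∈ Finset.range p, (1 : ℚ) / ((N : ℚ) - ((c : Composition N).sizeUpTo l : ℚ)))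
      = (Nat.card {σ : Equiv.Perm (Fin N) // permOrbitCount σ = p} : ℚ) /
        (N.factorial : ℚ) :=
  stmt_9_general N p
end
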